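/- Let q be a real number with 0 < q < 1, and let r ≥ 0 and n ≥ 1 be integers. Then the series below converge, and: if r = 0 then β_n^{(0)} = −n · Σ_{k=0}^{∞} q^k · [k]^{n−1} + (1−q)^{−n}, while if r ≥ 1 then β_n^{(r)} = −n · Σ_{k=0}^{∞} q^{(r+1)·k} · [k]^{n−1} + r·(1−q) · Σ_{k=0}^{∞} q^{r·k} · [k]^n. -/

import Mathlib

open Finset

/-- The q-bracket: `[x] = (q^x - 1)/(q - 1)`. -/
noncomputable def qb (q x : ℝ) : ℝ := (q ^ x - 1) / (q - 1)

/-- The extended Carlitz q-Bernoulli numbers of order `r`, with the convention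
`(k+r)/[k+r] = 1` when `k + r = 0`. -/
noncomputable def extBetaNum (q : ℝ) (r n : ℕ) : ℝ :=
  ((q - 1) ^ n)⁻¹ *
    ∑ k ∈ range (n + 1),
      (-1 : ℝ) ^ (n - k) * (n.choose k : ℝ) *
        (if k + r = 0 then 1 else ((k + r : ℕ) : ℝ) / qb q ((k + r : ℕ) : ℝ))

/-!
For `m ≥ 1`, `m / [m] = m (1 - q) / (1 - q^m) = m (1 - q) ∑_j q^{m j}`. Substituting
this into the defining alternating sum and exchanging the finite and the infinite sum, the inner
sum over `k` is evaluated by the binomial theorem at `x = q^j` and its derivative: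
`∑_k (-1)^{n-k} C(n,k) (k + r) x^k = n x (x - 1)^{n-1} + r (x - 1)^n`. Dividing by `(q - 1)^n`
turns `(q^j - 1)/(q - 1)` into `[j]`. The term `k + r = 0`, present only for `r = 0`, is the one
not covered by the geometric series and contributes `(-1)^n / (q - 1)^n = (1 - q)^{-n}`.
-/

section BinomialSums

variable {R : Type*} [CommRing R]

theorem sum_range_neg_one_pow_mul_choose_mul_pow (x : R) (n : ℕ) :
    ∑ k ∈ range (n + 1), (-1 : R) ^ (n - k) * (n.choose k : R) * x ^ k = (x - 1) ^ n := by
  rw [sub_eq_add_neg, add_pow]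
  exact sum_congr rfl fun k _ => by ring

theorem sum_range_neg_one_pow_mul_choose_mul_mul_pow (x : R) (n : ℕ) :
    ∑ k ∈ range (n + 1), (-1 : R) ^ (n - k) * (n.choose k : R) * k * x ^ k
      = n * x * (x - 1) ^ (n - 1) := by
  cases n with
  | zero => simp
  | succ m =>
    have hchoose (k : ℕ) :
        ((m + 1).choose (k + 1) : R) * ((k + 1 : ℕ) : R) = ((m + 1 : ℕ) : R) * (m.choose k : R) := by
      rw [← Nat.cast_mul, ← Nat.cast_mul, Nat.add_one_mul_choose_eq]
    rw [sum_range_succ', Nat.add_sub_cancel, ← sum_range_neg_one_pow_mul_choose_mul_pow x m,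
      mul_sum]
    simp only [Nat.cast_zero, mul_zero, zero_mul, add_zero]
    refine sum_congr rfl fun k _ => ?_
    rw [Nat.add_sub_add_right]
    linear_combination (-1 : R) ^ (m - k) * x ^ (k + 1) * hchoose k

theorem sum_range_neg_one_pow_mul_choose_mul_add_mul_pow (x r : R) (n : ℕ) :
    ∑ k ∈ range (n + 1), (-1 : R) ^ (n - k) * (n.choose k : R) * (k + r) * x ^ k
      = n * x * (x - 1) ^ (n - 1) + r * (x - 1) ^ n := by
  rw [← sum_range_neg_one_pow_mul_choose_mul_mul_pow, ← sum_range_neg_one_pow_mul_choose_mul_pow,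
    mul_sum, ← sum_add_distrib]
  exact sum_congr rfl fun k _ => by ring

end BinomialSums

theorem qb_natCast (q : ℝ) (k : ℕ) : qb q k = (q ^ k - 1) / (q - 1) := by
  rw [qb, Real.rpow_natCast]

section QBracket

variable {q : ℝ}

theorem abs_qb_natCast_le (hq : |q| < 1) (k : ℕ) : |qb q k| ≤ 2 / |q - 1| := by
  have hnum : |q ^ k - 1| ≤ 2 := by
    calc |q ^ k - 1| ≤ |q ^ k| + |1| := abs_sub _ _
      _ ≤ 1 + 1 := by
        rw [abs_pow, abs_one]
        gcongr
        exact pow_le_one₀ (abs_nonneg q) hq.le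
      _ = 2 := by norm_num
  rw [qb_natCast, abs_div]
  exact div_le_div_of_nonneg_right hnum (abs_nonneg _)

theorem summable_pow_mul_mul_qb_pow (hq : |q| < 1) {m : ℕ} (hm : m ≠ 0) (e : ℕ) :
    Summable fun k : ℕ => q ^ (m * k) * qb q k ^ e := by
  have hqm : |q ^ m| < 1 := by
    rw [abs_pow]
    exact pow_lt_one₀ (abs_nonneg q) hq hm
  refine Summable.of_norm_bounded
    ((summable_geometric_of_lt_one (abs_nonneg _) hqm).mul_left ((2 / |q - 1|) ^ e)) fun k => ?_
  rw [Real.norm_eq_abs, abs_mul, abs_pow, abs_pow, pow_mul, abs_pow, mul_comm]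
  gcongr
  exact abs_qb_natCast_le hq k

/-- For `m = 0` both sides vanish, the right one through the junk value `0 / [0] = 0 / 0 = 0`. -/
theorem hasSum_natCast_mul_geometric (hq : |q| < 1) (m : ℕ) :
    HasSum (fun j : ℕ => m * (1 - q) * q ^ (m * j)) (m / qb q m) := by
  rcases eq_or_ne m 0 with rfl | hm
  · simp
  have hqm : |q ^ m| < 1 := by
    rw [abs_pow]
    exact pow_lt_one₀ (abs_nonneg q) hq hm
  have hq1 : q - 1 ≠ 0 := sub_ne_zero.mpr (abs_lt.mp hq).2.ne
  have hqm1 : q ^ m - 1 ≠ 0 := sub_ne_zero.mpr (abs_lt.mp hqm).2.ne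
  have hqm1' : 1 - q ^ m ≠ 0 := sub_ne_zero.mpr (abs_lt.mp hqm).2.ne'
  have hvalue : (m : ℝ) / qb q m = m * (1 - q) * (1 - q ^ m)⁻¹ := by
    rw [qb_natCast]
    field_simp
    ring
  simp only [hvalue, pow_mul]
  exact (hasSum_geometric_of_abs_lt_one hqm).mul_left _

end QBracket

theorem extBetaNum_eq_sum_add_ite (q : ℝ) (r n : ℕ) :
    extBetaNum q r n
      = ((q - 1) ^ n)⁻¹ * ∑ k ∈ range (n + 1),
          (-1 : ℝ) ^ (n - k) * (n.choose k : ℝ) * (((k + r : ℕ) : ℝ) / qb q ((k + r : ℕ) : ℝ))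
        + if r = 0 then ((1 - q) ^ n)⁻¹ else 0 := by
  have hsplit (k : ℕ) : (if k + r = 0 then 1 else ((k + r : ℕ) : ℝ) / qb q ((k + r : ℕ) : ℝ))
      = ((k + r : ℕ) : ℝ) / qb q ((k + r : ℕ) : ℝ) + if k + r = 0 then 1 else 0 := by
    split_ifs with h
    · simp [h]
    · rw [add_zero]
  have hdelta : ((q - 1) ^ n)⁻¹ * ∑ k ∈ range (n + 1),
      (-1 : ℝ) ^ (n - k) * (n.choose k : ℝ) * (if k + r = 0 then 1 else 0)
      = if r = 0 then ((1 - q) ^ n)⁻¹ else 0 := by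
    rcases eq_or_ne r 0 with rfl | hr
    · simp [← inv_pow, ← mul_pow, ← inv_neg]
    · simp [hr]
  rw [extBetaNum, ← hdelta, ← mul_add, ← sum_add_distrib]
  simp only [hsplit, mul_add]

theorem inv_sub_one_pow_mul_sum_geometric (q : ℝ) (hq : q ≠ 1) (r n j : ℕ) :
    ((q - 1) ^ n)⁻¹ * ∑ k ∈ range (n + 1),
        (-1 : ℝ) ^ (n - k) * (n.choose k : ℝ) * (((k + r : ℕ) : ℝ) * (1 - q) * q ^ ((k + r) * j))
      = -(n : ℝ) * (q ^ ((r + 1) * j) * qb q j ^ (n - 1))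
        + (r : ℝ) * (1 - q) * (q ^ (r * j) * qb q j ^ n) := by
  have hinner : ∑ k ∈ range (n + 1),
        (-1 : ℝ) ^ (n - k) * (n.choose k : ℝ) * (((k + r : ℕ) : ℝ) * (1 - q) * q ^ ((k + r) * j))
      = (1 - q) * q ^ (r * j) * (n * q ^ j * (q ^ j - 1) ^ (n - 1) + r * (q ^ j - 1) ^ n) := by
    rw [← sum_range_neg_one_pow_mul_choose_mul_add_mul_pow, mul_sum]
    refine sum_congr rfl fun k _ => ?_
    rw [add_mul, pow_add, pow_mul, pow_mul]
    push_cast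
    ring
  have hq1 : q - 1 ≠ 0 := sub_ne_zero.mpr hq
  rw [hinner, qb_natCast, add_mul, pow_mul]
  cases n with
  | zero =>
    simp only [pow_zero, inv_one, one_mul, Nat.cast_zero, zero_mul, zero_add, mul_one]
    ring
  | succ n =>
    simp only [Nat.add_sub_cancel, div_pow]
    field_simp
    ring

theorem hasSum_extBetaNum {q : ℝ} (hq : |q| < 1) (r n : ℕ) :
    HasSum (fun j : ℕ => -(n : ℝ) * (q ^ ((r + 1) * j) * qb q j ^ (n - 1))
        + (r : ℝ) * (1 - q) * (q ^ (r * j) * qb q j ^ n))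
      (extBetaNum q r n - if r = 0 then ((1 - q) ^ n)⁻¹ else 0) := by
  have hq1 : q ≠ 1 := (abs_lt.mp hq).2.ne
  rw [extBetaNum_eq_sum_add_ite, add_sub_cancel_right]
  simp only [← inv_sub_one_pow_mul_sum_geometric q hq1 r n]
  exact ((hasSum_sum fun k _ => (hasSum_natCast_mul_geometric hq (k + r)).mul_left
    ((-1 : ℝ) ^ (n - k) * (n.choose k : ℝ))).mul_left ((q - 1) ^ n)⁻¹)

theorem extended_beta_series_representation_general (q : ℝ) (hq0 : 0 < q) (hq1 : q < 1)
    (r n : ℕ) :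
    (Summable fun k : ℕ => q ^ ((r + 1) * k) * (qb q k) ^ (n - 1)) ∧
    (r = 0 →
      extBetaNum q 0 n
        = -(n : ℝ) * (∑' k : ℕ, q ^ k * (qb q k) ^ (n - 1)) + ((1 - q) ^ n)⁻¹) ∧
    (1 ≤ r →
      (Summable fun k : ℕ => q ^ (r * k) * (qb q k) ^ n) ∧
      extBetaNum q r n
        = -(n : ℝ) * (∑' k : ℕ, q ^ ((r + 1) * k) * (qb q k) ^ (n - 1))
          + (r : ℝ) * (1 - q) * (∑' k : ℕ, q ^ (r * k) * (qb q k) ^ n)) := by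
  have hq : |q| < 1 := abs_lt.mpr ⟨by linarith, hq1⟩
  have hsummable := summable_pow_mul_mul_qb_pow hq (Nat.succ_ne_zero r) (n - 1)
  refine ⟨hsummable, fun hr => ?_, fun hr => ?_⟩
  · subst hr
    have hsum := hasSum_extBetaNum hq 0 n
    simp only [zero_add, one_mul, Nat.cast_zero, zero_mul, add_zero, if_true] at hsum
    rw [← tsum_mul_left, hsum.tsum_eq, sub_add_cancel]
  · have hsummable' := summable_pow_mul_mul_qb_pow hq (Nat.one_le_iff_ne_zero.mp hr) n
    refine ⟨hsummable', ?_⟩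
    have hsum := hasSum_extBetaNum hq r n
    rw [if_neg (Nat.one_le_iff_ne_zero.mp hr), sub_zero] at hsum
    rw [← hsum.tsum_eq, (hsummable.mul_left _).tsum_add (hsummable'.mul_left _), tsum_mul_left,
      tsum_mul_left]

theorem extended_beta_series_representation (q : ℝ) (hq0 : 0 < q) (hq1 : q < 1)
    (r n : ℕ) (hn : 1 ≤ n) :
    (Summable fun k : ℕ => q ^ ((r + 1) * k) * (qb q k) ^ (n - 1)) ∧
    (r = 0 →
      extBetaNum q 0 n
        = -(n : ℝ) * (∑' k : ℕ, q ^ k * (qb q k) ^ (n - 1)) + ((1 - q) ^ n)⁻¹) ∧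
    (1 ≤ r →
      (Summable fun k : ℕ => q ^ (r * k) * (qb q k) ^ n) ∧
      extBetaNum q r n
        = -(n : ℝ) * (∑' k : ℕ, q ^ ((r + 1) * k) * (qb q k) ^ (n - 1))
          + (r : ℝ) * (1 - q) * (∑' k : ℕ, q ^ (r * k) * (qb q k) ^ n)) :=
  extended_beta_series_representation_general q hq0 hq1 r n
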